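/- (Prescribed-time safety from an initially safe state, deterministic core.) Let n ≥ 1 and let c₁, …, cₙ be positive reals. Let h₁, …, hₙ : [t₀, t₀+T_pre) → ℝ be differentiable, satisfying the recursion h_{i+1}(t) = h_i'(t) + c_i·φ(t)·h_i(t) for all i = 1,…,n−1 and all t ∈ [t₀, t₀+T_pre), and suppose hₙ'(t) + cₙ·φ(t)·hₙ(t) ≥ 0 for all t ∈ [t₀, t₀+T_pre). If moreover h₁(t₀) ≥ 0 and h_j(t₀) > 0 for every j = 2,…,n, then h_j(t) > 0 for every j = 2,…,n and every t ∈ [t₀, t₀+T_pre), and h₁(t) ≥ h₁(t₀)·exp(−c₁ ∫_{t₀}^{t} φ(s) ds) ≥ 0 for all t ∈ [t₀, t₀+T_pre). -/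

import Mathlib

/-!
Integrating factor: if `f' + k φ f ≥ 0` on `[t₀, t₀ + T)`, then `f · exp (k ∫_{t₀}^t φ)` is
nondecreasing there, so `f t ≥ f t₀ · exp (-k ∫_{t₀}^t φ)`; in particular `f` stays positive if
it starts positive. Going down from `i = n`: once `h'ᵢ₊₁ + cᵢ₊₁ φ hᵢ₊₁ ≥ 0`, the comparison keeps
`hᵢ₊₁ = h'ᵢ + cᵢ φ hᵢ` positive, which is the same inequality one index lower.
-/

noncomputable def blowup (t₀ Tpre α : ℝ) (t : ℝ) : ℝ :=
  (Tpre ^ 2 + α * ((t - t₀) ^ 2 - (t - t₀) * Tpre) ^ 2) / (Tpre + t₀ - t) ^ 2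

open Set Real

theorem continuousOn_blowup (t₀ Tpre α : ℝ) :
    ContinuousOn (blowup t₀ Tpre α) (Iio (t₀ + Tpre)) := by
  intro t ht
  have hden : (Tpre + t₀ - t) ^ 2 ≠ 0 := pow_ne_zero _ (by simp only [mem_Iio] at ht; linarith)
  apply ContinuousAt.continuousWithinAt
  unfold blowup
  fun_prop (disch := exact hden)

section Comparison

variable {φ f f' : ℝ → ℝ} {a b k : ℝ}

theorem hasDerivAt_integral_of_continuousOn_Ico (hφ : ContinuousOn φ (Ico a b))
    {t : ℝ} (ht : t ∈ Ioo a b) : HasDerivAt (fun s => ∫ x in a..s, φ x) (φ t) t := by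
  have hint : IntervalIntegrable φ MeasureTheory.volume a t :=
    (hφ.mono (uIcc_of_le ht.1.le ▸ Icc_subset_Ico_right ht.2)).intervalIntegrable
  exact intervalIntegral.integral_hasDerivAt_right hint
    ((hφ.mono Ioo_subset_Ico_self).stronglyMeasurableAtFilter isOpen_Ioo t ht)
    (hφ.continuousAt (Ico_mem_nhds ht.1 ht.2))

theorem monotoneOn_mul_exp_integral_of_deriv_add_mul_nonneg (hφ : ContinuousOn φ (Ico a b))
    (hf : ∀ t ∈ Ico a b, HasDerivAt f (f' t) t)
    (hineq : ∀ t ∈ Ico a b, 0 ≤ f' t + k * φ t * f t) {t : ℝ} (ht : t ∈ Ico a b) :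
    MonotoneOn (fun s => f s * exp (k * ∫ x in a..s, φ x)) (Icc a t) := by
  set F : ℝ → ℝ := fun s => ∫ x in a..s, φ x
  have hsub : Icc a t ⊆ Ico a b := Icc_subset_Ico_right ht.2
  have hFcont : ContinuousOn F (Icc a t) := by
    have := intervalIntegral.continuousOn_primitive_interval (μ := MeasureTheory.volume)
      ((hφ.mono (uIcc_of_le ht.1 ▸ hsub)).integrableOn_compact isCompact_uIcc)
    rwa [uIcc_of_le ht.1] at this
  refine monotoneOn_of_hasDerivWithinAt_nonneg (convex_Icc a t)
    (fun s hs => ((hf s (hsub hs)).continuousAt.continuousWithinAt).mul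
      ((hFcont s hs).const_mul k).rexp) (fun s hs => ?_) (fun s hs => ?_)
    (f' := fun s => (f' s + k * φ s * f s) * exp (k * F s))
  all_goals rw [interior_Icc] at hs
  · have hF : HasDerivAt F (φ s) s :=
      hasDerivAt_integral_of_continuousOn_Ico hφ ⟨hs.1, hs.2.trans ht.2⟩
    have hg : HasDerivAt (fun s => f s * exp (k * F s))
        ((f' s + k * φ s * f s) * exp (k * F s)) s :=
      ((hf s (hsub (Ioo_subset_Icc_self hs))).fun_mul (hF.const_mul k).exp).congr_deriv (by ring)
    exact hg.hasDerivWithinAt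
  · exact mul_nonneg (hineq s (hsub (Ioo_subset_Icc_self hs))) (exp_pos _).le

theorem mul_exp_neg_integral_le_of_deriv_add_mul_nonneg (hφ : ContinuousOn φ (Ico a b))
    (hf : ∀ t ∈ Ico a b, HasDerivAt f (f' t) t)
    (hineq : ∀ t ∈ Ico a b, 0 ≤ f' t + k * φ t * f t) {t : ℝ} (ht : t ∈ Ico a b) :
    f a * exp (-k * ∫ s in a..t, φ s) ≤ f t := by
  have hle : f a ≤ f t * exp (k * ∫ s in a..t, φ s) := by
    simpa using monotoneOn_mul_exp_integral_of_deriv_add_mul_nonneg hφ hf hineq ht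
      (left_mem_Icc.2 ht.1) (right_mem_Icc.2 ht.1) ht.1
  calc f a * exp (-k * ∫ s in a..t, φ s)
      ≤ f t * exp (k * ∫ s in a..t, φ s) * exp (-k * ∫ s in a..t, φ s) :=
        mul_le_mul_of_nonneg_right hle (exp_pos _).le
    _ = f t := by rw [mul_assoc, ← exp_add, neg_mul, add_neg_cancel, exp_zero, mul_one]

theorem pos_of_deriv_add_mul_nonneg (hφ : ContinuousOn φ (Ico a b))
    (hf : ∀ t ∈ Ico a b, HasDerivAt f (f' t) t)
    (hineq : ∀ t ∈ Ico a b, 0 ≤ f' t + k * φ t * f t) (ha : 0 < f a) {t : ℝ} (ht : t ∈ Ico a b) :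
    0 < f t :=
  (mul_pos ha (exp_pos _)).trans_le
    (mul_exp_neg_integral_le_of_deriv_add_mul_nonneg hφ hf hineq ht)

end Comparison

theorem deriv_add_mul_nonneg_of_chain {φ : ℝ → ℝ} {a b : ℝ} (hφ : ContinuousOn φ (Ico a b))
    {n : ℕ} {c : ℕ → ℝ} {h h' : ℕ → ℝ → ℝ}
    (hderiv : ∀ i ∈ Finset.Icc 1 n, ∀ t ∈ Ico a b, HasDerivAt (h i) (h' i t) t)
    (hrec : ∀ i ∈ Finset.Icc 1 (n - 1), ∀ t ∈ Ico a b,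
      h (i + 1) t = h' i t + c i * φ t * h i t)
    (hlast : ∀ t ∈ Ico a b, 0 ≤ h' n t + c n * φ t * h n t)
    (hinit : ∀ j ∈ Finset.Icc 2 n, 0 < h j a) :
    ∀ i ∈ Finset.Icc 1 n, ∀ t ∈ Ico a b, 0 ≤ h' i t + c i * φ t * h i t := by
  intro i hi
  rw [Finset.mem_Icc] at hi
  induction hi.2 using Nat.decreasingInduction with
  | self => exact hlast
  | of_succ i hin ih =>
    intro t ht
    have hpos : 0 < h (i + 1) t :=
      pos_of_deriv_add_mul_nonneg hφ (hderiv (i + 1) (Finset.mem_Icc.2 ⟨by omega, hin⟩))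
        (ih ⟨by omega, hin⟩) (hinit (i + 1) (Finset.mem_Icc.2 ⟨by omega, hin⟩)) ht
    rw [hrec i (Finset.mem_Icc.2 ⟨hi.1, by omega⟩) t ht] at hpos
    exact hpos.le

theorem prescribed_time_safety_initially_safe_general (t₀ Tpre α : ℝ)
    (n : ℕ) (hn : 1 ≤ n) (c : ℕ → ℝ)
    (h h' : ℕ → ℝ → ℝ)
    (hderiv : ∀ i ∈ Finset.Icc 1 n, ∀ t ∈ Set.Ico t₀ (t₀ + Tpre),
      HasDerivAt (h i) (h' i t) t)
    (hrec : ∀ i ∈ Finset.Icc 1 (n - 1), ∀ t ∈ Set.Ico t₀ (t₀ + Tpre),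
      h (i + 1) t = h' i t + c i * blowup t₀ Tpre α t * h i t)
    (hlast : ∀ t ∈ Set.Ico t₀ (t₀ + Tpre),
      h' n t + c n * blowup t₀ Tpre α t * h n t ≥ 0)
    (h1init : 0 ≤ h 1 t₀)
    (hjinit : ∀ j ∈ Finset.Icc 2 n, 0 < h j t₀) :
    (∀ j ∈ Finset.Icc 2 n, ∀ t ∈ Set.Ico t₀ (t₀ + Tpre), 0 < h j t) ∧
    (∀ t ∈ Set.Ico t₀ (t₀ + Tpre),
      h 1 t ≥ h 1 t₀ * Real.exp (-(c 1) * ∫ s in t₀..t, blowup t₀ Tpre α s) ∧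
      0 ≤ h 1 t₀ * Real.exp (-(c 1) * ∫ s in t₀..t, blowup t₀ Tpre α s)) := by
  have hφ : ContinuousOn (blowup t₀ Tpre α) (Ico t₀ (t₀ + Tpre)) :=
    (continuousOn_blowup t₀ Tpre α).mono fun _ ht => ht.2
  have hchain := deriv_add_mul_nonneg_of_chain hφ hderiv hrec hlast hjinit
  have h1 : 1 ∈ Finset.Icc 1 n := Finset.mem_Icc.2 ⟨le_rfl, hn⟩
  refine ⟨fun j hj t ht => ?_, fun t ht => ⟨?_, mul_nonneg h1init (exp_pos _).le⟩⟩
  · have hj' : j ∈ Finset.Icc 1 n := by simp only [Finset.mem_Icc] at hj ⊢; omega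
    exact pos_of_deriv_add_mul_nonneg hφ (hderiv j hj') (hchain j hj') (hjinit j hj) ht
  · exact mul_exp_neg_integral_le_of_deriv_add_mul_nonneg hφ (hderiv 1 h1) (hchain 1 h1) ht

theorem prescribed_time_safety_initially_safe (t₀ Tpre α : ℝ) (hT : 0 < Tpre) (hα : 0 ≤ α)
    (n : ℕ) (hn : 1 ≤ n) (c : ℕ → ℝ)
    (hc : ∀ i ∈ Finset.Icc 1 n, 0 < c i)
    (h h' : ℕ → ℝ → ℝ)
    (hderiv : ∀ i ∈ Finset.Icc 1 n, ∀ t ∈ Set.Ico t₀ (t₀ + Tpre),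
      HasDerivAt (h i) (h' i t) t)
    (hrec : ∀ i ∈ Finset.Icc 1 (n - 1), ∀ t ∈ Set.Ico t₀ (t₀ + Tpre),
      h (i + 1) t = h' i t + c i * blowup t₀ Tpre α t * h i t)
    (hlast : ∀ t ∈ Set.Ico t₀ (t₀ + Tpre),
      h' n t + c n * blowup t₀ Tpre α t * h n t ≥ 0)
    (h1init : 0 ≤ h 1 t₀)
    (hjinit : ∀ j ∈ Finset.Icc 2 n, 0 < h j t₀) :
    (∀ j ∈ Finset.Icc 2 n, ∀ t ∈ Set.Ico t₀ (t₀ + Tpre), 0 < h j t) ∧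
    (∀ t ∈ Set.Ico t₀ (t₀ + Tpre),
      h 1 t ≥ h 1 t₀ * Real.exp (-(c 1) * ∫ s in t₀..t, blowup t₀ Tpre α s) ∧
      0 ≤ h 1 t₀ * Real.exp (-(c 1) * ∫ s in t₀..t, blowup t₀ Tpre α s)) :=
  prescribed_time_safety_initially_safe_general t₀ Tpre α n hn c h h' hderiv hrec hlast h1init
    hjinit
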